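/- If S is a countable set, then every family {(X_s, d_s)}_{s∈S} of nonempty metric spaces admits a coarse disjoint union, i.e., there is a metric d on the disjoint union ⨿_{s∈S} X_s making it a coarse disjoint union of the family. Moreover, if each d_s is an ultrametric (respectively, an integral ultrametric), then d can be chosen to be an ultrametric (respectively, an integral ultrametric). -/

import Mathlib

/-!
Enumerate `S` injectively by `ι : S → ℕ`, pick base points `p s ∈ X s`, and give a point
`x ∈ X s` the height `ρ x = max (d_s x (p s)) (ι s + 1)`. Keep `d_s` on each fibre and put points
of different fibres at distance `max (ρ x) (ρ y)`. Because `ρ` is `1`-Lipschitz on each fibre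
and `d_s x y ≤ ρ x + ρ y`, this is a metric; with `max` in place of `+` in both facts (true when
`d_s` is an ultrametric) it is an ultrametric, and it is integral when the `d_s` are. Points of
height `≤ M` lie in the finitely many fibres with `ι s < M`, and form a bounded set in each, so
outside them distinct fibres are more than `M` apart.
-/

/-- `d` is a metric on the set `X`. -/
def IsMetricD {X : Type*} (d : X → X → ℝ) : Prop :=
  (∀ x, d x x = 0) ∧ (∀ x y, d x y = 0 → x = y) ∧ (∀ x y, d x y = d y x) ∧
    (∀ x y z, d x z ≤ d x y + d y z)

/-- the ultrametric (strong triangle) inequality. -/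
def IsUltraD {X : Type*} (d : X → X → ℝ) : Prop :=
  ∀ x y z, d x z ≤ max (d x y) (d y z)

/-- There is an `r`-chain joining `a` and `b`. -/
def ChainD {Y : Type*} (d : Y → Y → ℝ) (r : ℝ) (a b : Y) : Prop :=
  ∃ (k : ℕ) (c : ℕ → Y), c 0 = a ∧ c k = b ∧ ∀ i < k, d (c i) (c (i + 1)) < r

/-- asymptotic dimension 0: chains of uniformly bounded gauge are uniformly bounded. -/
def AsDimZeroD {Y : Type*} (d : Y → Y → ℝ) : Prop :=
  ∀ r > (0 : ℝ), ∃ s > (0 : ℝ), ∀ a b : Y, ChainD d r a b → d a b ≤ s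

/-- large scale continuous (uniformly bornologous). -/
def LSCD {X Y : Type*} (dX : X → X → ℝ) (dY : Y → Y → ℝ) (f : X → Y) : Prop :=
  ∀ R > (0 : ℝ), ∃ s > (0 : ℝ), ∀ x y : X, dX x y ≤ R → dY (f x) (f y) ≤ s

/-- uniformly proper. -/
def UnifProperD {X Y : Type*} (dX : X → X → ℝ) (dY : Y → Y → ℝ) (f : X → Y) : Prop :=
  ∀ R > (0 : ℝ), ∃ s > (0 : ℝ), ∀ x y : X, dY (f x) (f y) ≤ R → dX x y ≤ s

/-- coarsely surjective. -/
def CoarselySurjD {X Y : Type*} (dY : Y → Y → ℝ) (f : X → Y) : Prop :=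
  ∃ R > (0 : ℝ), ∀ y : Y, ∃ x : X, dY (f x) y ≤ R

/-- coarse embedding. -/
def CoarseEmbD {X Y : Type*} (dX : X → X → ℝ) (dY : Y → Y → ℝ) (f : X → Y) : Prop :=
  LSCD dX dY f ∧ UnifProperD dX dY f

/-- coarse equivalence. -/
def CoarseEquivD {X Y : Type*} (dX : X → X → ℝ) (dY : Y → Y → ℝ) (f : X → Y) : Prop :=
  LSCD dX dY f ∧ UnifProperD dX dY f ∧ CoarselySurjD dY f

/-- the induced integral ultrametric `d_f^ul`. -/
noncomputable def dulD {X Y : Type*} (d : Y → Y → ℝ) (f : X → Y) (x y : X) : ℝ :=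
  letI := Classical.decEq X
  if x = y then 0 else
    ((sInf {r : ℕ | 1 ≤ r ∧ ChainD d (r : ℝ) (f x) (f y)} : ℕ) : ℝ)

/-- `d` is a metric on the subset `A`. -/
def IsMetricOnD {X : Type*} (d : X → X → ℝ) (A : Set X) : Prop :=
  (∀ x ∈ A, d x x = 0) ∧ (∀ x ∈ A, ∀ y ∈ A, d x y = 0 → x = y) ∧
    (∀ x ∈ A, ∀ y ∈ A, d x y = d y x) ∧
    (∀ x ∈ A, ∀ y ∈ A, ∀ z ∈ A, d x z ≤ d x y + d y z)

/-- the ultrametric inequality on a subset. -/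
def IsUltraOnD {X : Type*} (d : X → X → ℝ) (A : Set X) : Prop :=
  ∀ x ∈ A, ∀ y ∈ A, ∀ z ∈ A, d x z ≤ max (d x y) (d y z)

/-- every triangle is isosceles. -/
def IsoscelesD {X : Type*} (d : X → X → ℝ) : Prop :=
  ∀ x y z : X, d x y = d y z ∨ d x y = d x z ∨ d y z = d x z

/-- every triangle with vertices in `A` is isosceles. -/
def IsoscelesOnD {X : Type*} (d : X → X → ℝ) (A : Set X) : Prop :=
  ∀ x ∈ A, ∀ y ∈ A, ∀ z ∈ A, d x y = d y z ∨ d x y = d x z ∨ d y z = d x z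

/-- a set is bounded with respect to the distance function `d`. -/
def BoundedD {X : Type*} (d : X → X → ℝ) (A : Set X) : Prop :=
  ∃ C : ℝ, ∀ x ∈ A, ∀ y ∈ A, d x y ≤ C

/-- `d` makes the disjoint union `Σ s, X s` a coarse disjoint union of the family
of metrics `ds`. -/
def IsCoarseDisjointUnion {S : Type*} {X : S → Type*} (ds : ∀ s, X s → X s → ℝ)
    (d : (Σ s, X s) → (Σ s, X s) → ℝ) : Prop :=
  (∀ (s : S) (x y : X s), d ⟨s, x⟩ ⟨s, y⟩ = ds s x y) ∧
    ∀ M > (0 : ℝ), ∃ B : ∀ s, Set (X s),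
      (∀ s, BoundedD (ds s) (B s)) ∧ {s | (B s).Nonempty}.Finite ∧
      ∀ (s t : S) (x : X s) (y : X t), s ≠ t → x ∉ B s → y ∉ B t → d ⟨s, x⟩ ⟨t, y⟩ > M
theorem IsMetricD.nonneg {X : Type*} {d : X → X → ℝ} (hd : IsMetricD d) (x y : X) :
    0 ≤ d x y := by
  obtain ⟨h0, -, hsymm, htri⟩ := hd
  linarith [htri x y x, h0 x, hsymm x y]

section Glue

variable {S : Type*} {X : S → Type*}

open Classical in
noncomputable def glueDist (ds : ∀ s, X s → X s → ℝ) (ρ : (Σ s, X s) → ℝ) :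
    (Σ s, X s) → (Σ s, X s) → ℝ
  | ⟨s, x⟩, ⟨t, y⟩ => if h : s = t then ds t (h ▸ x) y else max (ρ ⟨s, x⟩) (ρ ⟨t, y⟩)

variable (ds : ∀ s, X s → X s → ℝ) (ρ : (Σ s, X s) → ℝ)

@[simp]
theorem glueDist_mk_mk_self (s : S) (x y : X s) : glueDist ds ρ ⟨s, x⟩ ⟨s, y⟩ = ds s x y := by
  simp [glueDist]

theorem glueDist_mk_mk_of_ne {s t : S} (h : s ≠ t) (x : X s) (y : X t) :
    glueDist ds ρ ⟨s, x⟩ ⟨t, y⟩ = max (ρ ⟨s, x⟩) (ρ ⟨t, y⟩) := by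
  simp [glueDist, h]

theorem glueDist_triangle (hds : ∀ s, IsMetricD (ds s)) (hρ_nonneg : ∀ a, 0 ≤ ρ a)
    (hρ_le : ∀ s (x y : X s), ρ ⟨s, x⟩ ≤ ds s x y + ρ ⟨s, y⟩)
    (hds_le : ∀ s (x y : X s), ds s x y ≤ ρ ⟨s, x⟩ + ρ ⟨s, y⟩) (a b c : Σ s, X s) :
    glueDist ds ρ a c ≤ glueDist ds ρ a b + glueDist ds ρ b c := by
  obtain ⟨s, a⟩ := a
  obtain ⟨t, b⟩ := b
  obtain ⟨u, c⟩ := c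
  obtain rfl | hst := eq_or_ne s t <;> obtain rfl | hsu := eq_or_ne s u
  · simpa using (hds s).2.2.2 a b c
  · rw [glueDist_mk_mk_self, glueDist_mk_mk_of_ne _ _ hsu, glueDist_mk_mk_of_ne _ _ hsu]
    have := (hds s).nonneg a b
    have := hρ_le s a b
    grind
  · rw [glueDist_mk_mk_self, glueDist_mk_mk_of_ne _ _ hst, glueDist_mk_mk_of_ne _ _ hst.symm]
    have := hds_le s a c
    grind
  · obtain rfl | htu := eq_or_ne t u
    · rw [glueDist_mk_mk_self, glueDist_mk_mk_of_ne _ _ hsu, glueDist_mk_mk_of_ne _ _ hsu]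
      have := (hds t).nonneg b c
      have := hρ_le t c b
      have := (hds t).2.2.1 c b
      grind
    · rw [glueDist_mk_mk_of_ne _ _ hsu, glueDist_mk_mk_of_ne _ _ hst,
        glueDist_mk_mk_of_ne _ _ htu]
      have := hρ_nonneg ⟨t, b⟩
      grind

theorem isMetricD_glueDist (hds : ∀ s, IsMetricD (ds s)) (hρ_pos : ∀ a, 0 < ρ a)
    (hρ_le : ∀ s (x y : X s), ρ ⟨s, x⟩ ≤ ds s x y + ρ ⟨s, y⟩)
    (hds_le : ∀ s (x y : X s), ds s x y ≤ ρ ⟨s, x⟩ + ρ ⟨s, y⟩) :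
    IsMetricD (glueDist ds ρ) := by
  refine ⟨?_, ?_, ?_, glueDist_triangle ds ρ hds (fun a => (hρ_pos a).le) hρ_le hds_le⟩
  · rintro ⟨s, x⟩
    simp [(hds s).1]
  · rintro ⟨s, x⟩ ⟨t, y⟩ h
    obtain rfl | hst := eq_or_ne s t
    · rw [glueDist_mk_mk_self] at h
      rw [(hds s).2.1 x y h]
    · rw [glueDist_mk_mk_of_ne _ _ hst] at h
      exact absurd h (lt_max_of_lt_left (hρ_pos _)).ne'
  · rintro ⟨s, x⟩ ⟨t, y⟩
    obtain rfl | hst := eq_or_ne s t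
    · simpa using (hds s).2.2.1 x y
    · rw [glueDist_mk_mk_of_ne _ _ hst, glueDist_mk_mk_of_ne _ _ hst.symm, max_comm]

theorem isUltraD_glueDist (hsymm : ∀ s (x y : X s), ds s x y = ds s y x)
    (hu : ∀ s, IsUltraD (ds s))
    (hρ_le : ∀ s (x y : X s), ρ ⟨s, x⟩ ≤ max (ds s x y) (ρ ⟨s, y⟩))
    (hds_le : ∀ s (x y : X s), ds s x y ≤ max (ρ ⟨s, x⟩) (ρ ⟨s, y⟩)) :
    IsUltraD (glueDist ds ρ) := by
  rintro ⟨s, a⟩ ⟨t, b⟩ ⟨u, c⟩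
  obtain rfl | hst := eq_or_ne s t <;> obtain rfl | hsu := eq_or_ne s u
  · simpa using hu s a b c
  · rw [glueDist_mk_mk_self, glueDist_mk_mk_of_ne _ _ hsu, glueDist_mk_mk_of_ne _ _ hsu]
    have := hρ_le s a b
    grind
  · rw [glueDist_mk_mk_self, glueDist_mk_mk_of_ne _ _ hst, glueDist_mk_mk_of_ne _ _ hst.symm]
    have := hds_le s a c
    grind
  · obtain rfl | htu := eq_or_ne t u
    · rw [glueDist_mk_mk_self, glueDist_mk_mk_of_ne _ _ hsu, glueDist_mk_mk_of_ne _ _ hsu]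
      have := hρ_le t c b
      have := hsymm t c b
      grind
    · rw [glueDist_mk_mk_of_ne _ _ hsu, glueDist_mk_mk_of_ne _ _ hst,
        glueDist_mk_mk_of_ne _ _ htu]
      grind

theorem exists_natCast_glueDist (hds : ∀ s (x y : X s), ∃ n : ℕ, ds s x y = n)
    (hρ : ∀ a, ∃ n : ℕ, ρ a = n) (a b : Σ s, X s) : ∃ n : ℕ, glueDist ds ρ a b = n := by
  obtain ⟨s, x⟩ := a
  obtain ⟨t, y⟩ := b
  obtain rfl | hst := eq_or_ne s t
  · simpa using hds s x y
  · obtain ⟨m, hm⟩ := hρ ⟨s, x⟩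
    obtain ⟨n, hn⟩ := hρ ⟨t, y⟩
    exact ⟨max m n, by rw [glueDist_mk_mk_of_ne _ _ hst, hm, hn, Nat.cast_max]⟩

theorem isCoarseDisjointUnion_glueDist
    (hds_le : ∀ s (x y : X s), ds s x y ≤ ρ ⟨s, x⟩ + ρ ⟨s, y⟩)
    (hρ_fin : ∀ M, {s | ∃ x, ρ ⟨s, x⟩ ≤ M}.Finite) :
    IsCoarseDisjointUnion ds (glueDist ds ρ) := by
  refine ⟨glueDist_mk_mk_self ds ρ, fun M _ => ⟨fun s => {x | ρ ⟨s, x⟩ ≤ M}, ?_, hρ_fin M, ?_⟩⟩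
  · exact fun s => ⟨M + M, fun x hx y hy => (hds_le s x y).trans (add_le_add hx hy)⟩
  · intro s t x y hst hx _
    rw [glueDist_mk_mk_of_ne _ _ hst]
    exact lt_max_of_lt_left (not_le.1 hx)

end Glue

section FiberHeight

variable {S : Type*} {X : S → Type*} (ds : ∀ s, X s → X s → ℝ) (p : ∀ s, X s) (ι : S → ℕ)

def fiberHeight (a : Σ s, X s) : ℝ :=
  max (ds a.1 a.2 (p a.1)) (ι a.1 + 1)

theorem fiberHeight_pos (a : Σ s, X s) : 0 < fiberHeight ds p ι a :=
  lt_max_of_lt_right (by positivity)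

theorem finite_setOf_fiberHeight_le (hι : ι.Injective) (M : ℝ) :
    {s | ∃ x, fiberHeight ds p ι ⟨s, x⟩ ≤ M}.Finite := by
  refine ((Set.finite_Iic ⌊M⌋₊).preimage hι.injOn).subset ?_
  rintro s ⟨x, hx⟩
  have : (ι s : ℝ) + 1 ≤ M := (le_max_right _ _).trans hx
  exact Nat.le_floor (by linarith)

theorem exists_natCast_fiberHeight (hds : ∀ s (x y : X s), ∃ n : ℕ, ds s x y = n)
    (a : Σ s, X s) : ∃ n : ℕ, fiberHeight ds p ι a = n := by
  obtain ⟨n, hn⟩ := hds a.1 a.2 (p a.1)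
  exact ⟨max n (ι a.1 + 1), by rw [fiberHeight, hn, Nat.cast_max, Nat.cast_succ]⟩

variable {ds}

theorem dist_le_fiberHeight_add_fiberHeight (hds : ∀ s, IsMetricD (ds s)) (s : S)
    (x y : X s) :
    ds s x y ≤ fiberHeight ds p ι ⟨s, x⟩ + fiberHeight ds p ι ⟨s, y⟩ := by
  have := (hds s).2.2.2 x (p s) y
  have := (hds s).2.2.1 y (p s)
  unfold fiberHeight
  grind

theorem fiberHeight_le_dist_add_fiberHeight (hds : ∀ s, IsMetricD (ds s)) (s : S)
    (x y : X s) :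
    fiberHeight ds p ι ⟨s, x⟩ ≤ ds s x y + fiberHeight ds p ι ⟨s, y⟩ := by
  have := (hds s).2.2.2 x y (p s)
  have := (hds s).nonneg x y
  unfold fiberHeight
  grind

theorem dist_le_max_fiberHeight (hds : ∀ s, IsMetricD (ds s)) (hu : ∀ s, IsUltraD (ds s))
    (s : S) (x y : X s) :
    ds s x y ≤ max (fiberHeight ds p ι ⟨s, x⟩) (fiberHeight ds p ι ⟨s, y⟩) := by
  have := hu s x (p s) y
  have := (hds s).2.2.1 y (p s)
  unfold fiberHeight
  grind

theorem fiberHeight_le_max_dist_fiberHeight (hu : ∀ s, IsUltraD (ds s)) (s : S)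
    (x y : X s) :
    fiberHeight ds p ι ⟨s, x⟩ ≤ max (ds s x y) (fiberHeight ds p ι ⟨s, y⟩) := by
  have := hu s x y (p s)
  unfold fiberHeight
  grind

end FiberHeight

/-- Any countably indexed family of nonempty metric spaces admits a coarse
disjoint union; moreover if all the metrics are ultrametrics (resp. integral ultrametrics),
the coarse disjoint union can be chosen to be an ultrametric (resp. integral ultrametric)
space. -/
theorem coarse_disjoint_union_exists
    {S : Type*} [Countable S] {X : S → Type*} (hne : ∀ s : S, Nonempty (X s))
    (ds : ∀ s, X s → X s → ℝ) (hds : ∀ s, IsMetricD (ds s)) :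
    (∃ d : (Σ s, X s) → (Σ s, X s) → ℝ, IsMetricD d ∧ IsCoarseDisjointUnion ds d) ∧
    ((∀ s, IsUltraD (ds s)) →
      ∃ d : (Σ s, X s) → (Σ s, X s) → ℝ, IsMetricD d ∧ IsUltraD d ∧
        IsCoarseDisjointUnion ds d) ∧
    ((∀ s, IsUltraD (ds s)) → (∀ (s : S) (x y : X s), ∃ n : ℕ, ds s x y = (n : ℝ)) →
      ∃ d : (Σ s, X s) → (Σ s, X s) → ℝ, IsMetricD d ∧ IsUltraD d ∧
        (∀ p q : Σ s, X s, ∃ n : ℕ, d p q = (n : ℝ)) ∧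
        IsCoarseDisjointUnion ds d) := by
  obtain ⟨ι, hι⟩ := Countable.exists_injective_nat S
  let p : ∀ s, X s := fun s => (hne s).some
  let d := glueDist ds (fiberHeight ds p ι)
  have hdist := dist_le_fiberHeight_add_fiberHeight p ι hds
  have hmetric : IsMetricD d := isMetricD_glueDist ds _ hds (fiberHeight_pos ds p ι)
    (fiberHeight_le_dist_add_fiberHeight p ι hds) hdist
  have hcdu : IsCoarseDisjointUnion ds d :=
    isCoarseDisjointUnion_glueDist ds _ hdist (finite_setOf_fiberHeight_le ds p ι hι)
  have hultra (hu : ∀ s, IsUltraD (ds s)) : IsUltraD d :=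
    isUltraD_glueDist ds _ (fun s => (hds s).2.2.1) hu
      (fiberHeight_le_max_dist_fiberHeight p ι hu) (dist_le_max_fiberHeight p ι hds hu)
  refine ⟨⟨d, hmetric, hcdu⟩, fun hu => ⟨d, hmetric, hultra hu, hcdu⟩, fun hu hint => ?_⟩
  exact ⟨d, hmetric, hultra hu,
    exists_natCast_glueDist ds _ hint (exists_natCast_fiberHeight ds p ι hint), hcdu⟩
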